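/- Let A be a skew brace, and for a, b ∈ A set λ_a(b) = ⊖a ⊕ (a⊙b) and a*b = λ_a(b) ⊖ b. Then for all x, a, b ∈ A one has λ_b(x*a) = (b ⊙ x ⊙ b⁻¹) * λ_b(a), where b⁻¹ is the inverse of b with respect to ⊙. -/

import Mathlib

/-- The lambda map of a skew brace: `λ_a b = ⊖a ⊕ (a ⊙ b)`. -/
def sbLambda (A : Type*) [AddGroup A] [Group A] (a b : A) : A := -a + a * b

/-- The star operation of a skew brace: `a * b = λ_a(b) ⊖ b`. -/
def sbStar (A : Type*) [AddGroup A] [Group A] (a b : A) : A := sbLambda A a b + -b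

/-!
The map `a ↦ λ_a` is a homomorphism from `(A, ⊙)` to the automorphisms of `(A, ⊕)`. Hence
`λ_b (x * a) = λ_b (λ_x a) ⊖ λ_b a = λ_{b ⊙ x} a ⊖ λ_b a`, and writing `b ⊙ x = (b ⊙ x ⊙ b⁻¹) ⊙ b`
turns the right-hand side into `λ_{b ⊙ x ⊙ b⁻¹} (λ_b a) ⊖ λ_b a = (b ⊙ x ⊙ b⁻¹) * λ_b a`.
-/

section SkewBrace

variable {A : Type*} [AddGroup A] [Group A]
  (hl : ∀ a b c : A, a * (b + c) = a * b + -a + a * c)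
include hl

theorem brace_mul_zero (a : A) : a * (0 : A) = a := by
  have h := hl a 0 0
  rw [add_zero, right_eq_add, add_neg_eq_zero] at h
  exact h

theorem sbLambda_add (a b c : A) : sbLambda A a (b + c) = sbLambda A a b + sbLambda A a c := by
  simp only [sbLambda, hl, add_assoc]

theorem sbLambda_zero (a : A) : sbLambda A a 0 = 0 := by
  rw [sbLambda, brace_mul_zero hl, neg_add_cancel]

theorem sbLambda_neg (a b : A) : sbLambda A a (-b) = -sbLambda A a b := by
  refine eq_neg_of_add_eq_zero_left ?_
  rw [← sbLambda_add hl, neg_add_cancel, sbLambda_zero hl]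

theorem sbLambda_mul (a b c : A) : sbLambda A (a * b) c = sbLambda A a (sbLambda A b c) := by
  change _ = sbLambda A a (-b + b * c)
  rw [sbLambda_add hl, sbLambda_neg hl]
  simp only [sbLambda, mul_assoc, neg_add_rev, neg_neg, add_assoc, add_neg_cancel_left]

theorem sbLambda_sbStar (b x a : A) :
    sbLambda A b (sbStar A x a) = sbLambda A (b * x) a + -sbLambda A b a := by
  rw [sbStar, sbLambda_add hl, sbLambda_neg hl, sbLambda_mul hl]

end SkewBrace

/-- In a skew brace, `λ_b(x * a) = (b ⊙ x ⊙ b⁻¹) * λ_b(a)` for all `x, a, b`,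
where `*` denotes the star operation. -/
theorem skew_brace_lambda_star
    (A : Type*) [AddGroup A] [Group A]
    (hl : ∀ a b c : A, a * (b + c) = a * b + -a + a * c) :
    ∀ x a b : A, sbLambda A b (sbStar A x a) = sbStar A (b * x * b⁻¹) (sbLambda A b a) := by
  intro x a b
  rw [sbLambda_sbStar hl, sbStar, ← sbLambda_mul hl, inv_mul_cancel_right]
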